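/- arXiv:2210.11133 — 2 statements merged into one kernel-verified Lean document; each statement's English description precedes it below -/
import Mathlib

section
/- (Inverse-wealth asymptotic.) Fix q ∈ (1,2], λ_max ∈ (0,1), and let f be a probability density on [0, λ_max], continuous on (0, λ_max], with f(λ) = f₀ λ^{q/2 − 1} + O(λ^{q/2}) as λ → 0⁺, f₀ > 0. Then for every κ > q λ_max^{q−1}, as v → ∞: ∫_0^{λ_max} exp(−κ v λ + λ^q v) f(λ) dλ = f₀ · Γ(q/2) · (κ v)^{−q/2} · (1 + O(v^{−(q−1)})). -/
open Real Filter Asymptotics MeasureTheory intervalIntegral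

open Set Topology

/-!
Write `f = f₀ λ^(q/2-1) + u` with `|u λ| ≤ K λ^(q/2)` on `(0, λ_max]`. Since `λ^q ≤ λ_max^(q-1) λ`
there, the weight `exp (-κvλ + λ^q v)` is at most `exp (-cvλ)` with `c = κ - λ_max^(q-1) > 0`,
so every error term is dominated by a Gamma integral `∫₀^∞ λ^a e^(-tλ) dλ = Γ(a+1) t^(-(a+1))`.
For the model density `λ^(q/2-1)` the error is `∫ λ^(q/2-1) e^(-κvλ) (e^(vλ^q) - 1)`, and
`e^(vλ^q) - 1 ≤ vλ^q e^(vλ^q)` makes it `O(v · v^(-3q/2))`, the claimed relative order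
`v^(-(q-1))`; the tail over `(λ_max, ∞)` is exponentially small. The perturbation `u` contributes
`O(v^(-q/2-1))`, which is of the same or smaller order because `q ≤ 2`.
-/

lemma integrableOn_rpow_mul_exp_neg_mul_Ioi {a r : ℝ} (ha : -1 < a) (hr : 0 < r) :
    IntegrableOn (fun t : ℝ => t ^ a * exp (-(r * t))) (Ioi 0) :=
  (integrableOn_rpow_mul_exp_neg_mul_rpow ha one_pos hr).congr_fun
    (fun t _ => by simp only [rpow_one, neg_mul]) measurableSet_Ioi

lemma integral_rpow_mul_exp_neg_mul_Ioi_eq_Gamma {a r : ℝ} (ha : -1 < a) (hr : 0 < r) :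
    ∫ t in Ioi 0, t ^ a * exp (-(r * t)) = Gamma (a + 1) * r ^ (-(a + 1)) := by
  have h := integral_rpow_mul_exp_neg_mul_Ioi (neg_lt_iff_pos_add.1 ha) hr
  rwa [add_sub_cancel_right, one_div, inv_rpow hr.le, ← rpow_neg hr.le, mul_comm] at h

lemma exists_abs_le_mul_rpow_of_isBigO {u : ℝ → ℝ} {b p : ℝ} (hu : ContinuousOn u (Ioc 0 b))
    (hO : u =O[𝓝[>] 0] fun l => l ^ p) : ∃ K, 0 ≤ K ∧ ∀ l ∈ Ioc 0 b, |u l| ≤ K * l ^ p := by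
  obtain ⟨C, hC⟩ := hO.bound
  obtain ⟨δ, hδ, hnear⟩ := mem_nhdsGT_iff_exists_Ioo_subset.1 hC
  have hδ0 : (0 : ℝ) < δ := hδ
  have hcont : ContinuousOn (fun l => u l / l ^ p) (Icc δ b) :=
    (hu.mono fun l hl => ⟨hδ0.trans_le hl.1, hl.2⟩).div
      (continuousOn_id.rpow_const fun l hl => Or.inl (hδ0.trans_le hl.1).ne')
      fun l hl => (rpow_pos_of_pos (hδ0.trans_le hl.1) p).ne'
  obtain ⟨M, hM⟩ := isCompact_Icc.exists_bound_of_continuousOn hcont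
  refine ⟨max |C| M, (abs_nonneg C).trans (le_max_left _ _), fun l hl => ?_⟩
  have hlp : 0 < l ^ p := rpow_pos_of_pos hl.1 p
  rcases lt_or_ge l δ with hlδ | hδl
  · have h : ‖u l‖ ≤ C * ‖l ^ p‖ := hnear ⟨hl.1, hlδ⟩
    rw [norm_eq_abs, norm_of_nonneg hlp.le] at h
    exact h.trans (mul_le_mul_of_nonneg_right ((le_abs_self C).trans (le_max_left _ _)) hlp.le)
  · have h := hM l ⟨hδl, hl.2⟩
    rw [norm_eq_abs, abs_div, abs_of_pos hlp, div_le_iff₀ hlp] at h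
    exact h.trans (mul_le_mul_of_nonneg_right (le_max_right _ _) hlp.le)

lemma exp_add_sub_exp_le (x y : ℝ) : exp (x + y) - exp x ≤ y * exp (x + y) := by
  have h : exp x = exp (x + y) * exp (-y) := by rw [← exp_add]; ring_nf
  nlinarith [one_sub_le_exp_neg y, exp_pos (x + y)]

lemma neg_mul_add_rpow_mul_le {q b κ v l : ℝ} (hq : 1 ≤ q) (hv : 0 ≤ v) (hl : l ∈ Ioc 0 b) :
    -(κ * v * l) + l ^ q * v ≤ -((κ - b ^ (q - 1)) * v * l) := by
  have hlq : l ^ q ≤ b ^ (q - 1) * l := calc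
    l ^ q = l ^ (q - 1) * l := by rw [← rpow_add_one hl.1.ne', sub_add_cancel]
    _ ≤ b ^ (q - 1) * l :=
      mul_le_mul_of_nonneg_right (rpow_le_rpow hl.1.le hl.2 (sub_nonneg.2 hq)) hl.1.le
  nlinarith

lemma integrableOn_exp_phase_mul {g : ℝ → ℝ} {q b κ v p K : ℝ} (hq : 1 ≤ q)
    (hκ : b ^ (q - 1) ≤ κ) (hv : 0 ≤ v) (hg : ContinuousOn g (Ioc 0 b)) (hp : -1 < p)
    (hgK : ∀ l ∈ Ioc 0 b, |g l| ≤ K * l ^ p) :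
    IntegrableOn (fun l => exp (-(κ * v * l) + l ^ q * v) * g l) (Ioc 0 b) := by
  have hphase : Continuous fun l : ℝ => -(κ * v * l) + l ^ q * v := by
    have := continuous_rpow_const (zero_le_one.trans hq)
    fun_prop
  refine Integrable.mono' ((intervalIntegrable_rpow' (a := 0) (b := b) hp).1.const_mul K)
    (((continuous_exp.comp hphase).continuousOn.mul hg).aestronglyMeasurable measurableSet_Ioc) ?_
  filter_upwards [ae_restrict_mem measurableSet_Ioc] with l hl
  have hexp : exp (-(κ * v * l) + l ^ q * v) ≤ 1 :=
    (exp_le_exp.2 (neg_mul_add_rpow_mul_le hq hv hl)).trans (exp_le_one_iff.2 (by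
      have := mul_nonneg (mul_nonneg (sub_nonneg.2 hκ) hv) hl.1.le
      linarith))
  calc ‖exp (-(κ * v * l) + l ^ q * v) * g l‖ = exp (-(κ * v * l) + l ^ q * v) * |g l| := by
        rw [norm_mul, norm_of_nonneg (exp_pos _).le, norm_eq_abs]
    _ ≤ 1 * (K * l ^ p) := mul_le_mul hexp (hgK l hl) (abs_nonneg _) zero_le_one
    _ = K * l ^ p := one_mul _

lemma isBigO_setIntegral_Ioc_of_abs_le {F : ℝ → ℝ → ℝ} {b K c m a : ℝ} (hK : 0 ≤ K)
    (hc : 0 < c) (ha : -1 < a)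
    (hF : ∀ v > 0, ∀ l ∈ Ioc 0 b, |F v l| ≤ K * v ^ m * (l ^ a * exp (-(c * v * l)))) :
    (fun v => ∫ l in Ioc 0 b, F v l) =O[atTop] fun v => v ^ (m - (a + 1)) := by
  refine IsBigO.of_bound (K * Gamma (a + 1) * c ^ (-(a + 1))) ?_
  filter_upwards [eventually_gt_atTop 0] with v hv
  have hcv : 0 < c * v := mul_pos hc hv
  have hint : IntegrableOn (fun l => K * v ^ m * (l ^ a * exp (-(c * v * l)))) (Ioi 0) :=
    (integrableOn_rpow_mul_exp_neg_mul_Ioi ha hcv).const_mul _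
  calc ‖∫ l in Ioc 0 b, F v l‖ ≤ ∫ l in Ioc 0 b, K * v ^ m * (l ^ a * exp (-(c * v * l))) :=
        MeasureTheory.norm_integral_le_of_norm_le (hint.mono_set Ioc_subset_Ioi_self)
          ((ae_restrict_mem measurableSet_Ioc).mono fun l hl => hF v hv l hl)
    _ ≤ ∫ l in Ioi 0, K * v ^ m * (l ^ a * exp (-(c * v * l))) :=
        setIntegral_mono_set hint
          ((ae_restrict_mem measurableSet_Ioi).mono fun l (hl : 0 < l) => by positivity)
          Ioc_subset_Ioi_self.eventuallyLE
    _ = K * Gamma (a + 1) * c ^ (-(a + 1)) * ‖v ^ (m - (a + 1))‖ := by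
        rw [MeasureTheory.integral_const_mul, integral_rpow_mul_exp_neg_mul_Ioi_eq_Gamma ha hcv,
          norm_of_nonneg (rpow_nonneg hv.le _), mul_rpow hc.le hv.le, sub_eq_add_neg,
          rpow_add hv]
        ring

lemma isBigO_setIntegral_Ioi_rpow_mul_exp_neg {a b κ : ℝ} (ha : a ≤ 0) (hb : 0 < b)
    (hκ : 0 < κ) (e : ℝ) :
    (fun v => ∫ l in Ioi b, l ^ a * exp (-(κ * v * l))) =O[atTop] fun v => v ^ e := by
  refine IsBigO.trans ?_ (isLittleO_exp_neg_mul_rpow_atTop (mul_pos hκ hb) e).isBigO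
  refine IsBigO.of_bound (b ^ a / κ) ?_
  filter_upwards [eventually_ge_atTop 1] with v hv
  have hκv : 0 < κ * v := by positivity
  have hexp := integrableOn_exp_mul_Ioi (neg_lt_zero.2 hκv) b
  calc ‖∫ l in Ioi b, l ^ a * exp (-(κ * v * l))‖ ≤ ∫ l in Ioi b, b ^ a * exp (-(κ * v) * l) :=
        MeasureTheory.norm_integral_le_of_norm_le (hexp.const_mul _)
          ((ae_restrict_mem measurableSet_Ioi).mono fun l (hl : b < l) => by
            have hl0 : 0 < l := hb.trans hl
            rw [norm_of_nonneg (by positivity), neg_mul]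
            exact mul_le_mul_of_nonneg_right (rpow_le_rpow_of_nonpos hb hl.le ha) (exp_pos _).le)
    _ = b ^ a / κ * exp (-(κ * b) * v) / v := by
        rw [MeasureTheory.integral_const_mul, integral_exp_mul_Ioi (neg_lt_zero.2 hκv),
          neg_div_neg_eq]
        field_simp
    _ ≤ b ^ a / κ * ‖exp (-(κ * b) * v)‖ := by
        rw [norm_of_nonneg (exp_pos _).le]
        exact div_le_self (by positivity) hv

lemma isBigO_rpow_atTop_mul_rpow {κ s r e : ℝ} (hκ : 0 < κ) (he : e ≤ -s - r) :
    (fun v : ℝ => v ^ e) =O[atTop] fun v => (κ * v) ^ (-s) * v ^ (-r) := by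
  refine IsBigO.of_bound (κ ^ s) ?_
  filter_upwards [eventually_ge_atTop 1] with v hv
  have hv0 : 0 < v := one_pos.trans_le hv
  rw [norm_of_nonneg (rpow_nonneg hv0.le _), norm_of_nonneg (by positivity)]
  calc v ^ e ≤ v ^ (-s - r) := rpow_le_rpow_of_exponent_le hv he
    _ = κ ^ s * ((κ * v) ^ (-s) * v ^ (-r)) := by
        rw [mul_rpow hκ.le hv0.le, sub_eq_add_neg, rpow_add hv0, rpow_neg hκ.le]
        field_simp

lemma isBigO_setIntegral_exp_phase_mul {g : ℝ → ℝ} {q b κ p K : ℝ} (hq : 1 ≤ q)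
    (hκ : b ^ (q - 1) < κ) (hp : -1 < p) (hK : 0 ≤ K) (hgK : ∀ l ∈ Ioc 0 b, |g l| ≤ K * l ^ p) :
    (fun v => ∫ l in Ioc 0 b, exp (-(κ * v * l) + l ^ q * v) * g l)
      =O[atTop] fun v => v ^ (-(p + 1)) := by
  have h := isBigO_setIntegral_Ioc_of_abs_le (F := fun v l => exp (-(κ * v * l) + l ^ q * v) * g l)
    (m := 0) hK (sub_pos.2 hκ) hp fun v hv l hl => by
      rw [abs_mul, abs_of_pos (exp_pos _), rpow_zero, mul_one]
      calc exp (-(κ * v * l) + l ^ q * v) * |g l|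
          ≤ exp (-((κ - b ^ (q - 1)) * v * l)) * (K * l ^ p) :=
            mul_le_mul (exp_le_exp.2 (neg_mul_add_rpow_mul_le hq hv.le hl)) (hgK l hl)
              (abs_nonneg _) (exp_pos _).le
        _ = K * (l ^ p * exp (-((κ - b ^ (q - 1)) * v * l))) := by ring
  simpa only [zero_sub] using h

lemma setIntegral_exp_phase_mul_rpow_sub_Gamma_eq {q b κ s v : ℝ} (hq : 1 ≤ q) (hb : 0 < b)
    (hκ : b ^ (q - 1) ≤ κ) (hs : 0 < s) (hv : 0 < v) :
    (∫ l in Ioc 0 b, exp (-(κ * v * l) + l ^ q * v) * l ^ (s - 1)) - Gamma s * (κ * v) ^ (-s)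
      = (∫ l in Ioc 0 b, (exp (-(κ * v * l) + l ^ q * v) * l ^ (s - 1)
          - l ^ (s - 1) * exp (-(κ * v * l))))
        - ∫ l in Ioi b, l ^ (s - 1) * exp (-(κ * v * l)) := by
  have hκv : 0 < κ * v := mul_pos ((rpow_pos_of_pos hb _).trans_le hκ) hv
  have hG := integrableOn_rpow_mul_exp_neg_mul_Ioi (a := s - 1) (by linarith) hκv
  have hF : IntegrableOn (fun l => exp (-(κ * v * l) + l ^ q * v) * l ^ (s - 1)) (Ioc 0 b) :=
    integrableOn_exp_phase_mul (K := 1) (p := s - 1) hq hκ hv.le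
      (continuousOn_id.rpow_const fun l hl => Or.inl hl.1.ne') (by linarith)
      fun l hl => by rw [one_mul, abs_of_pos (rpow_pos_of_pos hl.1 _)]
  have hΓ := integral_rpow_mul_exp_neg_mul_Ioi_eq_Gamma (a := s - 1) (by linarith) hκv
  rw [sub_add_cancel, ← Ioc_union_Ioi_eq_Ioi hb.le,
    setIntegral_union (Ioc_disjoint_Ioi le_rfl) measurableSet_Ioi
      (hG.mono_set Ioc_subset_Ioi_self) (hG.mono_set (Ioi_subset_Ioi hb.le))] at hΓ
  rw [← hΓ, MeasureTheory.integral_sub hF (hG.mono_set Ioc_subset_Ioi_self)]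
  ring

lemma abs_exp_phase_mul_rpow_sub_le {q b κ s v l : ℝ} (hq : 1 ≤ q) (hv : 0 ≤ v)
    (hl : l ∈ Ioc 0 b) :
    |exp (-(κ * v * l) + l ^ q * v) * l ^ (s - 1) - l ^ (s - 1) * exp (-(κ * v * l))|
      ≤ v * (l ^ (q + s - 1) * exp (-((κ - b ^ (q - 1)) * v * l))) := by
  have hl0 : 0 < l := hl.1
  have hgrow : exp (-(κ * v * l)) ≤ exp (-(κ * v * l) + l ^ q * v) :=
    exp_le_exp.2 (le_add_of_nonneg_right (by positivity))
  calc |exp (-(κ * v * l) + l ^ q * v) * l ^ (s - 1) - l ^ (s - 1) * exp (-(κ * v * l))|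
      = (exp (-(κ * v * l) + l ^ q * v) - exp (-(κ * v * l))) * l ^ (s - 1) := by
        rw [abs_of_nonneg (by nlinarith [rpow_pos_of_pos hl0 (s - 1)])]
        ring
    _ ≤ l ^ q * v * exp (-(κ * v * l) + l ^ q * v) * l ^ (s - 1) := by
        gcongr
        exact exp_add_sub_exp_le _ _
    _ ≤ l ^ q * v * exp (-((κ - b ^ (q - 1)) * v * l)) * l ^ (s - 1) := by
        gcongr
        exact neg_mul_add_rpow_mul_le hq hv hl
    _ = v * (l ^ (q + s - 1) * exp (-((κ - b ^ (q - 1)) * v * l))) := by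
        rw [add_sub_assoc, rpow_add hl0]
        ring

lemma isBigO_setIntegral_exp_phase_mul_rpow_sub_Gamma {q b κ s : ℝ} (hq : 1 ≤ q) (hb : 0 < b)
    (hκ : b ^ (q - 1) < κ) (hs0 : 0 < s) (hs1 : s ≤ 1) :
    (fun v => (∫ l in Ioc 0 b, exp (-(κ * v * l) + l ^ q * v) * l ^ (s - 1))
        - Gamma s * (κ * v) ^ (-s))
      =O[atTop] fun v => (κ * v) ^ (-s) * v ^ (-(q - 1)) := by
  have hκ0 : 0 < κ := (rpow_pos_of_pos hb _).trans hκ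
  have hnear : (fun v => ∫ l in Ioc 0 b, (exp (-(κ * v * l) + l ^ q * v) * l ^ (s - 1)
      - l ^ (s - 1) * exp (-(κ * v * l)))) =O[atTop] fun v => v ^ (1 - (q + s - 1 + 1)) :=
    isBigO_setIntegral_Ioc_of_abs_le zero_le_one (sub_pos.2 hκ) (by linarith)
      fun v hv l hl => by
        simpa only [rpow_one, one_mul] using abs_exp_phase_mul_rpow_sub_le (s := s) hq hv.le hl
  have htail := isBigO_setIntegral_Ioi_rpow_mul_exp_neg (a := s - 1) (by linarith) hb hκ0
    (-s - (q - 1))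
  refine ((hnear.trans (isBigO_rpow_atTop_mul_rpow hκ0 (by linarith))).sub
    (htail.trans (isBigO_rpow_atTop_mul_rpow hκ0 le_rfl))).congr' ?_ EventuallyEq.rfl
  filter_upwards [eventually_gt_atTop 0] with v hv
  exact (setIntegral_exp_phase_mul_rpow_sub_Gamma_eq hq hb hκ.le hs0 hv).symm

lemma integral_exp_phase_mul_eq_add {f : ℝ → ℝ} {q b κ v f₀ a p K : ℝ} (hq : 1 ≤ q)
    (hb : 0 ≤ b) (hκ : b ^ (q - 1) ≤ κ) (hv : 0 ≤ v) (hf : ContinuousOn f (Ioc 0 b))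
    (ha : -1 < a) (hp : -1 < p) (hK : ∀ l ∈ Ioc 0 b, |f l - f₀ * l ^ a| ≤ K * l ^ p) :
    ∫ l in (0 : ℝ)..b, exp (-(κ * v * l) + l ^ q * v) * f l
      = f₀ * (∫ l in Ioc 0 b, exp (-(κ * v * l) + l ^ q * v) * l ^ a)
        + ∫ l in Ioc 0 b, exp (-(κ * v * l) + l ^ q * v) * (f l - f₀ * l ^ a) := by
  have hpow : ContinuousOn (fun l : ℝ => l ^ a) (Ioc 0 b) :=
    continuousOn_id.rpow_const fun l hl => Or.inl hl.1.ne'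
  have hmodel := integrableOn_exp_phase_mul (K := 1) hq hκ hv hpow ha
    fun l hl => by rw [one_mul, abs_of_pos (rpow_pos_of_pos hl.1 _)]
  have hu : ContinuousOn (fun l => f l - f₀ * l ^ a) (Ioc 0 b) :=
    hf.sub (continuousOn_const.mul hpow)
  have hpert := integrableOn_exp_phase_mul hq hκ hv hu hp hK
  rw [integral_of_le hb, ← MeasureTheory.integral_const_mul,
    ← MeasureTheory.integral_add (hmodel.const_mul f₀) hpert]
  congr 1 with l
  ring

theorem inverse_wealth_asymptotic_general
    (q lmax f₀ : ℝ) (hq : q ∈ Set.Ioc (1 : ℝ) 2) (hlmax : lmax ∈ Set.Ioo (0 : ℝ) 1)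
    (f : ℝ → ℝ)
    (hf_cont : ContinuousOn f (Set.Ioc 0 lmax))
    (hf_asymp : (fun l => f l - f₀ * l ^ (q / 2 - 1))
      =O[nhdsWithin 0 (Set.Ioi 0)] fun l => l ^ (q / 2))
    (κ : ℝ) (hκ : q * lmax ^ (q - 1) < κ) :
    (fun v => (∫ l in (0 : ℝ)..lmax, Real.exp (-(κ * v * l) + l ^ q * v) * f l)
        - f₀ * Real.Gamma (q / 2) * (κ * v) ^ (-(q / 2)))
      =O[atTop] fun v : ℝ => (κ * v) ^ (-(q / 2)) * v ^ (-(q - 1)) := by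
  obtain ⟨hq1, hq2⟩ := hq
  have hb : 0 < lmax := hlmax.1
  have hκ' : lmax ^ (q - 1) < κ :=
    (le_mul_of_one_le_left (rpow_nonneg hb.le _) hq1.le).trans_lt hκ
  have hκ0 : 0 < κ := (rpow_pos_of_pos hb _).trans hκ'
  have hu : ContinuousOn (fun l => f l - f₀ * l ^ (q / 2 - 1)) (Ioc 0 lmax) :=
    hf_cont.sub (continuousOn_const.mul (continuousOn_id.rpow_const fun l hl => Or.inl hl.1.ne'))
  obtain ⟨K, hK0, hK⟩ := exists_abs_le_mul_rpow_of_isBigO hu hf_asymp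
  have hmodel := isBigO_setIntegral_exp_phase_mul_rpow_sub_Gamma hq1.le hb hκ' (s := q / 2)
    (by linarith) (by linarith)
  have hpert := (isBigO_setIntegral_exp_phase_mul hq1.le hκ' (p := q / 2) (by linarith) hK0
    hK).trans (isBigO_rpow_atTop_mul_rpow (s := q / 2) (r := q - 1) hκ0 (by linarith))
  refine ((hmodel.const_mul_left f₀).add hpert).congr' ?_ EventuallyEq.rfl
  filter_upwards [eventually_gt_atTop 0] with v hv
  rw [integral_exp_phase_mul_eq_add hq1.le hb.le hκ'.le hv.le hf_cont (by linarith)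
    (by linarith : -1 < q / 2) hK]
  ring

/-- **Inverse-wealth asymptotic.** Fix `q ∈ (1,2]`, `λ_max ∈ (0,1)`, a probability
density `f` on `[0, λ_max]`, continuous on `(0, λ_max]`, with
`f(λ) = f₀ λ^{q/2−1} + O(λ^{q/2})` as `λ → 0⁺`, `f₀ > 0`.  Then for every
`κ > q λ_max^{q−1}`, as `v → ∞`,
`∫₀^{λ_max} exp(−κ v λ + λ^q v) f(λ) dλ = f₀ Γ(q/2) (κ v)^{−q/2} (1 + O(v^{−(q−1)}))`. -/
theorem inverse_wealth_asymptotic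
    (q lmax f₀ : ℝ) (hq : q ∈ Set.Ioc (1 : ℝ) 2) (hlmax : lmax ∈ Set.Ioo (0 : ℝ) 1)
    (hf₀ : 0 < f₀)
    (f : ℝ → ℝ)
    (hf_nonneg : ∀ l ∈ Set.Icc 0 lmax, 0 ≤ f l)
    (hf_prob : (∫ l in (0 : ℝ)..lmax, f l) = 1)
    (hf_cont : ContinuousOn f (Set.Ioc 0 lmax))
    (hf_asymp : (fun l => f l - f₀ * l ^ (q / 2 - 1))
      =O[nhdsWithin 0 (Set.Ioi 0)] fun l => l ^ (q / 2))
    (κ : ℝ) (hκ : q * lmax ^ (q - 1) < κ) :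
    (fun v => (∫ l in (0 : ℝ)..lmax, Real.exp (-(κ * v * l) + l ^ q * v) * f l)
        - f₀ * Real.Gamma (q / 2) * (κ * v) ^ (-(q / 2)))
      =O[atTop] fun v : ℝ => (κ * v) ^ (-(q / 2)) * v ^ (-(q - 1)) :=
  inverse_wealth_asymptotic_general q lmax f₀ hq hlmax f hf_cont hf_asymp κ hκ
end

section
/- (Upper sandwich.) Fix q ∈ (1,2], α ∈ (0,1), λ_max ∈ (0,1), and let f be a probability density on [0, λ_max], continuous on (0, λ_max], with f(λ) = f₀ λ^{q/2 − 1} + O(λ^{q/2}) as λ → 0⁺, f₀ > 0. Define M^{(q)}_α(v) ≐ sup{ s ∈ ℝ : ∫_0^{λ_max} exp(λs − λ^q v) f(λ) dλ ≤ 1/α }. Then M^{(q)}_α(v) = o(v) as v → ∞, i.e. M^{(q)}_α(v)/v → 0. -/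
/-!
At `s = εv` the wealth is `∫ exp(v (εl − l^q)) f(l) dl`. Since `q > 1`, the exponent `εl − l^q`
is bounded below by a positive constant on a small interval `[b/2, b]` near `0`, and the
asymptotics `f(l) ≈ f₀ l^{q/2−1}` make `f` positive there; so the wealth grows exponentially in `v`
and eventually exceeds `1/α`. As the wealth is increasing in `s` and at most `∫ f = 1 ≤ 1/α`
at `s = 0`, the boundary is squeezed into `[0, εv]`.
-/

open Real Filter Topology Asymptotics MeasureTheory intervalIntegral

theorem csSup_setOf_le_mem_Icc {α β : Type*} [ConditionallyCompleteLinearOrder α] [Preorder β]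
    {F : α → β} {K : β} {a t : α} (hF : Monotone F) (ha : F a ≤ K) (ht : ¬F t ≤ K) :
    sSup {s | F s ≤ K} ∈ Set.Icc a t := by
  have hbdd : ∀ s ∈ {s | F s ≤ K}, s ≤ t := fun s hs =>
    le_of_not_gt fun hts => ht ((hF hts.le).trans hs)
  exact ⟨le_csSup ⟨t, hbdd⟩ ha, csSup_le ⟨a, ha⟩ hbdd⟩

theorem eventually_pos_of_isBigO_sub_const_mul_rpow {f : ℝ → ℝ} {c p : ℝ} (hc : 0 < c)
    (h : (fun l => f l - c * l ^ p) =O[𝓝[>] 0] fun l => l ^ (p + 1)) :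
    ∀ᶠ l in 𝓝[>] 0, 0 < f l := by
  obtain ⟨C, hC⟩ := h.bound
  have hsmall : ∀ᶠ l in 𝓝[>] 0, C * l < c :=
    (((continuous_const_mul C).tendsto' 0 0 (mul_zero C)).mono_left
      nhdsWithin_le_nhds).eventually (gt_mem_nhds hc)
  filter_upwards [hC, hsmall, self_mem_nhdsWithin] with l hl hCl (hl0 : 0 < l)
  rw [norm_eq_abs, norm_of_nonneg (rpow_nonneg hl0.le _), rpow_add_one hl0.ne'] at hl
  have hlp : 0 < l ^ p := rpow_pos_of_pos hl0 p
  nlinarith [(abs_le.1 hl).1, mul_pos hlp (sub_pos.2 hCl)]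

/-- The wealth `m_q(s, v)`, with `v` first so that `mixtureWealth q lmax f v` is a function
of `s`. -/
noncomputable def mixtureWealth (q lmax : ℝ) (f : ℝ → ℝ) (v s : ℝ) : ℝ :=
  ∫ l in (0 : ℝ)..lmax, exp (l * s - l ^ q * v) * f l

section mixtureWealth

variable {q lmax : ℝ} {f : ℝ → ℝ}

theorem intervalIntegrable_exp_mul (hq : 0 ≤ q) (hf : IntervalIntegrable f volume 0 lmax)
    (v s : ℝ) : IntervalIntegrable (fun l => exp (l * s - l ^ q * v) * f l) volume 0 lmax :=
  hf.continuousOn_mul (by fun_prop (disch := exact hq))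

theorem mixtureWealth_monotone (hq : 0 ≤ q) (hlmax : 0 ≤ lmax)
    (hf_nonneg : ∀ l ∈ Set.Icc 0 lmax, 0 ≤ f l) (hf : IntervalIntegrable f volume 0 lmax)
    (v : ℝ) : Monotone (mixtureWealth q lmax f v) := fun s₁ s₂ hs =>
  integral_mono_on hlmax (intervalIntegrable_exp_mul hq hf v s₁)
    (intervalIntegrable_exp_mul hq hf v s₂) fun l hl =>
      mul_le_mul_of_nonneg_right (exp_le_exp.2 (by nlinarith [hl.1])) (hf_nonneg l hl)

theorem mixtureWealth_zero_le (hq : 0 ≤ q) (hlmax : 0 ≤ lmax)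
    (hf_nonneg : ∀ l ∈ Set.Icc 0 lmax, 0 ≤ f l) (hf : IntervalIntegrable f volume 0 lmax)
    {v : ℝ} (hv : 0 ≤ v) : mixtureWealth q lmax f v 0 ≤ ∫ l in (0 : ℝ)..lmax, f l := by
  refine integral_mono_on hlmax (intervalIntegrable_exp_mul hq hf v 0) hf fun l hl => ?_
  have hexp : exp (l * 0 - l ^ q * v) ≤ 1 :=
    exp_le_one_iff.2 (by nlinarith [rpow_nonneg hl.1 q])
  simpa using mul_le_mul_of_nonneg_right hexp (hf_nonneg l hl)

theorem exp_mul_integral_le_mixtureWealth (hq : 0 ≤ q)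
    (hf_nonneg : ∀ l ∈ Set.Icc 0 lmax, 0 ≤ f l) (hf : IntervalIntegrable f volume 0 lmax)
    {a b c ε v : ℝ} (ha : 0 ≤ a) (hab : a ≤ b) (hb : b ≤ lmax)
    (hc : ∀ l ∈ Set.Icc a b, c ≤ l * ε - l ^ q) (hv : 0 ≤ v) :
    exp (c * v) * ∫ l in a..b, f l ≤ mixtureWealth q lmax f v (ε * v) := by
  have hint := intervalIntegrable_exp_mul hq hf v (ε * v)
  have hsub : Set.uIcc a b ⊆ Set.uIcc 0 lmax := by
    rw [Set.uIcc_of_le hab, Set.uIcc_of_le (ha.trans (hab.trans hb))]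
    exact Set.Icc_subset_Icc ha hb
  calc exp (c * v) * ∫ l in a..b, f l
      = ∫ l in a..b, exp (c * v) * f l := (intervalIntegral.integral_const_mul _ _).symm
    _ ≤ ∫ l in a..b, exp (l * (ε * v) - l ^ q * v) * f l := by
        refine integral_mono_on hab ((hf.mono_set hsub).const_mul _) (hint.mono_set hsub)
          fun l hl => ?_
        rw [show l * (ε * v) - l ^ q * v = (l * ε - l ^ q) * v by ring]
        exact mul_le_mul_of_nonneg_right
          (exp_le_exp.2 (mul_le_mul_of_nonneg_right (hc l hl) hv))
          (hf_nonneg l ⟨ha.trans hl.1, hl.2.trans hb⟩)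
    _ ≤ mixtureWealth q lmax f v (ε * v) := by
        refine integral_mono_interval ha hab hb ?_ hint
        rw [EventuallyLE, ae_restrict_iff' measurableSet_Ioc]
        exact ae_of_all _ fun l hl =>
          mul_nonneg (exp_pos _).le (hf_nonneg l (Set.Ioc_subset_Icc_self hl))

theorem tendsto_mixtureWealth_mul_atTop (hq : 1 < q) (hlmax : 0 < lmax)
    (hf_nonneg : ∀ l ∈ Set.Icc 0 lmax, 0 ≤ f l) (hf : IntervalIntegrable f volume 0 lmax)
    (hf_pos : ∀ᶠ l in 𝓝[>] 0, 0 < f l) {ε : ℝ} (hε : 0 < ε) :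
    Tendsto (fun v => mixtureWealth q lmax f v (ε * v)) atTop atTop := by
  have hsmall : ∀ᶠ l in 𝓝[>] 0, l ^ (q - 1) ≤ ε / 2 :=
    (((continuous_rpow_const (by linarith)).tendsto' 0 0
      (zero_rpow (by linarith))).mono_left nhdsWithin_le_nhds).eventually
        (Iic_mem_nhds (half_pos hε))
  have hle : ∀ᶠ l in 𝓝[>] 0, l ≤ lmax :=
    nhdsWithin_le_nhds (Iic_mem_nhds hlmax)
  obtain ⟨b, hb : 0 < b, hbP⟩ :=
    mem_nhdsGT_iff_exists_Ioc_subset.1 (hf_pos.and (hsmall.and hle))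
  have hP : ∀ l ∈ Set.Icc (b / 2) b, 0 < l ∧ 0 < f l ∧ l ^ (q - 1) ≤ ε / 2 ∧ l ≤ lmax :=
    fun l hl =>
      have hl0 : 0 < l := by linarith [hl.1]
      ⟨hl0, hbP ⟨hl0, hl.2⟩⟩
  -- `l ε − l^q = l (ε − l^{q−1}) ≥ l ε / 2 ≥ b ε / 4` on `[b/2, b]`
  have hgap : ∀ l ∈ Set.Icc (b / 2) b, ε * b / 4 ≤ l * ε - l ^ q := by
    intro l hl
    obtain ⟨hl0, -, hlq, -⟩ := hP l hl
    have hpow : l ^ q = l ^ (q - 1) * l := by rw [← rpow_add_one hl0.ne', sub_add_cancel]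
    nlinarith [hl.1]
  have hb_le : b ≤ lmax := (hP b ⟨by linarith, le_rfl⟩).2.2.2
  have hsub : Set.uIcc (b / 2) b ⊆ Set.uIcc 0 lmax := by
    rw [Set.uIcc_of_le (by linarith), Set.uIcc_of_le hlmax.le]
    exact Set.Icc_subset_Icc (by linarith) hb_le
  have hmass : 0 < ∫ l in b / 2..b, f l :=
    intervalIntegral_pos_of_pos_on (hf.mono_set hsub)
      (fun l hl => (hP l (Set.Ioo_subset_Icc_self hl)).2.1) (by linarith)
  have hexp : Tendsto (fun v => exp (ε * b / 4 * v) * ∫ l in b / 2..b, f l) atTop atTop :=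
    (tendsto_exp_atTop.comp (tendsto_id.const_mul_atTop (by positivity))).atTop_mul_const hmass
  refine tendsto_atTop_mono' _ ?_ hexp
  filter_upwards [eventually_ge_atTop 0] with v hv
  exact exp_mul_integral_le_mixtureWealth (by linarith) hf_nonneg hf (by linarith)
    (by linarith) hb_le hgap hv

end mixtureWealth

theorem upper_sandwich_general
    (q α lmax f₀ : ℝ) (hq : q ∈ Set.Ioc (1 : ℝ) 2) (hα : α ∈ Set.Ioo (0 : ℝ) 1)
    (hlmax : lmax ∈ Set.Ioo (0 : ℝ) 1) (hf₀ : 0 < f₀)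
    (f : ℝ → ℝ)
    (hf_nonneg : ∀ l ∈ Set.Icc 0 lmax, 0 ≤ f l)
    (hf_prob : (∫ l in (0 : ℝ)..lmax, f l) = 1)
    (hf_asymp : (fun l => f l - f₀ * l ^ (q / 2 - 1))
      =O[nhdsWithin 0 (Set.Ioi 0)] fun l => l ^ (q / 2))
    (M : ℝ → ℝ)
    (hM : ∀ v, M v = sSup {s : ℝ |
      (∫ l in (0 : ℝ)..lmax, Real.exp (l * s - l ^ q * v) * f l) ≤ 1 / α}) :
    Tendsto (fun v => M v / v) atTop (nhds 0) := by
  obtain ⟨hq1, -⟩ := hq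
  obtain ⟨hα0, hα1⟩ := hα
  obtain ⟨hlmax0, -⟩ := hlmax
  have hf : IntervalIntegrable f volume 0 lmax :=
    intervalIntegrable_of_integral_ne_zero (by rw [hf_prob]; exact one_ne_zero)
  have hf_pos : ∀ᶠ l in 𝓝[>] 0, 0 < f l :=
    eventually_pos_of_isBigO_sub_const_mul_rpow hf₀ (by rwa [sub_add_cancel])
  have hone : (1 : ℝ) ≤ 1 / α := by rw [le_div_iff₀ hα0]; linarith
  have hM_isLittleO : M =o[atTop] id := isLittleO_iff.2 fun ε hε => by
    filter_upwards [(tendsto_mixtureWealth_mul_atTop hq1 hlmax0 hf_nonneg hf hf_pos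
      hε).eventually_gt_atTop (1 / α), eventually_ge_atTop 0] with v hv hv0
    have hMv : M v ∈ Set.Icc 0 (ε * v) := hM v ▸ csSup_setOf_le_mem_Icc
      (mixtureWealth_monotone (by linarith) hlmax0.le hf_nonneg hf v)
      ((mixtureWealth_zero_le (by linarith) hlmax0.le hf_nonneg hf hv0).trans
        (hf_prob ▸ hone)) hv.not_ge
    rw [norm_of_nonneg hMv.1, id, norm_of_nonneg hv0]
    exact hMv.2
  simpa using hM_isLittleO.tendsto_div_nhds_zero

/-- **Upper sandwich.** `M^{(q)}_α(v) = o(v)` as `v → ∞`, i.e. `M^{(q)}_α(v)/v → 0`,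
where `M^{(q)}_α(v)` is the `v`-parametrized mixture boundary
`sup{s : ∫₀^{λ_max} exp(λs − λ^q v) f(λ) dλ ≤ 1/α}`. -/
theorem upper_sandwich
    (q α lmax f₀ : ℝ) (hq : q ∈ Set.Ioc (1 : ℝ) 2) (hα : α ∈ Set.Ioo (0 : ℝ) 1)
    (hlmax : lmax ∈ Set.Ioo (0 : ℝ) 1) (hf₀ : 0 < f₀)
    (f : ℝ → ℝ)
    (hf_nonneg : ∀ l ∈ Set.Icc 0 lmax, 0 ≤ f l)
    (hf_prob : (∫ l in (0 : ℝ)..lmax, f l) = 1)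
    (hf_cont : ContinuousOn f (Set.Ioc 0 lmax))
    (hf_asymp : (fun l => f l - f₀ * l ^ (q / 2 - 1))
      =O[nhdsWithin 0 (Set.Ioi 0)] fun l => l ^ (q / 2))
    (M : ℝ → ℝ)
    (hM : ∀ v, M v = sSup {s : ℝ |
      (∫ l in (0 : ℝ)..lmax, Real.exp (l * s - l ^ q * v) * f l) ≤ 1 / α}) :
    Tendsto (fun v => M v / v) atTop (nhds 0) :=
  upper_sandwich_general q α lmax f₀ hq hα hlmax hf₀ f hf_nonneg hf_prob hf_asymp M hM
end
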